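/- arXiv:math/0508553 — 4 statements merged into one kernel-verified Lean document; each statement's English description precedes it below -/
import Mathlib

section
/- Let ω_1, ..., ω_k be finitely many complex numbers, each of modulus 1, with k ≥ 1. Then the sequence N ↦ ω_1^N + ... + ω_k^N does not converge to 0 as N → ∞. -/
open Filter

/-!
The vector `(ω_1, …, ω_k)` lives in the compact group `𝕋^k`, and in a compact group the powers
of any element return arbitrarily late into every neighbourhood of `1`. At such an exponent `N`
every `ω_j ^ N` is within `1/2` of `1`, so `|∑ ω_j ^ N| > k/2 ≥ 1/2`.
-/

theorem frequently_pow_mem_nhds_one {G : Type*} [Group G] [TopologicalSpace G]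
    [IsTopologicalGroup G] [CompactSpace G] (g : G) {U : Set G} (hU : U ∈ nhds 1) :
    ∃ᶠ n in atTop, g ^ n ∈ U := by
  obtain ⟨a, -, ha⟩ := isCompact_univ.exists_mapClusterPt (f := atTop) (u := (g ^ ·))
    (Filter.le_principal_iff.2 univ_mem)
  obtain ⟨V, hV, hVU⟩ := exists_nhds_split_inv hU
  -- `g ^ n / g ^ m = (g ^ n / a) / (g ^ m / a)`, so two returns near `a` give one near `1`.
  have hW : {x | x / a ∈ V} ∈ nhds a :=
    (continuous_div_right' a).continuousAt.preimage_mem_nhds (by rwa [div_self'])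
  have hnear : ∃ᶠ n in atTop, g ^ n / a ∈ V := ha.frequently hW
  rw [frequently_atTop] at hnear ⊢
  intro N
  obtain ⟨m, -, hm⟩ := hnear 0
  obtain ⟨n, hn, hn'⟩ := hnear (m + N)
  refine ⟨n - m, by omega, ?_⟩
  have hsplit : g ^ (n - m) = g ^ n / a / (g ^ m / a) := by
    rw [div_div_div_cancel_right, pow_sub _ (by omega : m ≤ n), div_eq_mul_inv]
  exact hsplit ▸ hVU _ hn' _ hm

theorem half_card_lt_norm_sum {ι : Type*} [Fintype ι] [Nonempty ι] (z : ι → ℂ)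
    (hz : ∀ j, ‖z j - 1‖ < 1 / 2) : (Fintype.card ι : ℝ) / 2 < ‖∑ j, z j‖ := by
  have hdev : ‖∑ j, z j - Fintype.card ι‖ < Fintype.card ι / 2 :=
    calc ‖∑ j, z j - Fintype.card ι‖ = ‖∑ j, (z j - 1)‖ := by simp [Finset.sum_sub_distrib]
      _ ≤ ∑ j, ‖z j - 1‖ := norm_sum_le _ _
      _ < ∑ _j : ι, (1 / 2 : ℝ) :=
        Finset.sum_lt_sum_of_nonempty Finset.univ_nonempty fun j _ => hz j
      _ = Fintype.card ι / 2 := by simp [div_eq_mul_inv]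
  have htri := norm_sub_norm_le (Fintype.card ι : ℂ) (∑ j, z j)
  rw [norm_sub_rev, Complex.norm_natCast] at htri
  linarith

/-- A nonempty finite sum of `N`-th powers of complex numbers of modulus `1`
does not converge to `0` as `N → ∞`. -/
theorem stmt_4 (k : ℕ) (hk : 1 ≤ k) (ω : Fin k → ℂ)
    (hω : ∀ j, ‖ω j‖ = 1) :
    ¬ Tendsto (fun N : ℕ => ∑ j, ω j ^ N) atTop (nhds 0) := by
  intro h
  have : Nonempty (Fin k) := ⟨⟨0, hk⟩⟩
  let g : Fin k → Circle := fun j => ⟨ω j, mem_sphere_zero_iff_norm.2 (hω j)⟩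
  have hreturn := frequently_pow_mem_nhds_one g (Metric.ball_mem_nhds 1 one_half_pos)
  have hsmall := h.eventually (Metric.ball_mem_nhds 0 one_half_pos)
  obtain ⟨N, hN, hsumN⟩ := (hreturn.and_eventually hsmall).exists
  have hclose : ∀ j, ‖ω j ^ N - 1‖ < 1 / 2 := fun j => by
    rw [← Complex.dist_eq]
    exact (dist_pi_lt_iff one_half_pos).1 hN j
  have hbig := half_card_lt_norm_sum _ hclose
  rw [Fintype.card_fin] at hbig
  rw [dist_zero_right] at hsumN
  have hk' : (1 : ℝ) ≤ k := by exact_mod_cast hk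
  linarith
end

section
/- For any α ∈ Z^+ and any n ∈ ℤ, there are only finitely many convex paths p = (x_1, ..., x_l) in Z^+ of total weight α satisfying μ(x_1) ≥ n. -/
/-- `Z⁺ = {(r,d) ∈ ℤ² : r > 0, or r = 0 and d > 0}`. -/
def Zpos (x : ℤ × ℤ) : Prop := 0 < x.1 ∨ (x.1 = 0 ∧ 0 < x.2)

/-- `slopeLE x y` means `μ(x) ≤ μ(y)` (cross multiplication, valid on `Z⁺`). -/
def slopeLE (x y : ℤ × ℤ) : Prop := x.2 * y.1 ≤ y.2 * x.1

/-- `slopeEQ x y` means `μ(x) = μ(y)`. -/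
def slopeEQ (x y : ℤ × ℤ) : Prop := x.2 * y.1 = y.2 * x.1

/-- A convex path: a finite sequence of elements of `Z⁺` with weakly increasing slopes,
where consecutive entries of equal slope have weakly decreasing degree coordinate. -/
def ConvexPath (p : List (ℤ × ℤ)) : Prop :=
  (∀ x ∈ p, Zpos x) ∧
  p.Chain' fun x y => slopeLE x y ∧ (slopeEQ x y → y.2 ≤ x.2)

/-!
Slopes increase along a convex path, so every entry of a path whose first slope is at least `n`
has slope at least `n`. The shear `(r, d) ↦ (r, d - n r)` therefore sends each entry into the
positive cone of `ℤ × ℤ` (product order) and turns the path into a list of positive elements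
with sum the shear of `α`. In a locally finite ordered group there are only finitely many such
lists: removing the first entry `x` replaces the sum `a` by `a - x`, and `Icc 0 (a - x)` is a
proper subset of `Icc 0 a`, so one can induct on the cardinality of `Icc 0 a`.
-/

open List

section PositiveLists

variable {M : Type*} [AddCommGroup M] [PartialOrder M] [IsOrderedAddMonoid M]
  [LocallyFiniteOrder M]

theorem List.finite_setOf_forall_pos_sum_eq (a : M) :
    {l : List M | (∀ x ∈ l, 0 < x) ∧ l.sum = a}.Finite := by
  induction hk : (Finset.Icc 0 a).card using Nat.strong_induction_on generalizing a with
  | _ k ih =>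
  subst hk
  have hsub : {l : List M | (∀ x ∈ l, 0 < x) ∧ l.sum = a} ⊆
      {[]} ∪ ⋃ x ∈ Finset.Ioc 0 a,
        (x :: ·) '' {l : List M | (∀ x ∈ l, 0 < x) ∧ l.sum = a - x} := by
    rintro (_ | ⟨x, l⟩) ⟨hpos, hsum⟩
    · exact Or.inl rfl
    · simp only [mem_cons, forall_eq_or_imp, sum_cons] at hpos hsum
      have hl : 0 ≤ l.sum := sum_nonneg fun y hy => (hpos.2 y hy).le
      refine Or.inr (Set.mem_biUnion (Finset.mem_Ioc.2 ⟨hpos.1, ?_⟩) ⟨l, ⟨hpos.2, ?_⟩, rfl⟩)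
      · rw [← hsum]; exact le_add_of_nonneg_right hl
      · rw [← hsum, add_sub_cancel_left]
  refine ((Set.finite_singleton _).union <|
    (Finset.finite_toSet _).biUnion fun x hx => ?_).subset hsub
  obtain ⟨hx, hxa⟩ := Finset.mem_Ioc.1 hx
  have hcard : (Finset.Icc 0 (a - x)).card < (Finset.Icc 0 a).card :=
    Finset.card_lt_card <|
      Finset.Icc_ssubset_Icc_right (hx.le.trans hxa) le_rfl (sub_lt_self a hx)
  exact (ih _ hcard _ rfl).image _

end PositiveLists

def shear (n : ℤ) : ℤ × ℤ →+ ℤ × ℤ :=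
  AddMonoidHom.mk' (fun x => (x.1, x.2 - n * x.1)) fun x y => by
    ext <;> simp only [Prod.fst_add, Prod.snd_add]; ring

theorem shear_injective (n : ℤ) : Function.Injective (shear n) := by
  intro x y h
  simp only [shear, AddMonoidHom.mk'_apply, Prod.mk.injEq] at h
  ext <;> [exact h.1; linarith [h.2, congrArg (n * ·) h.1]]

theorem zero_lt_shear {n : ℤ} {x : ℤ × ℤ} (hx : Zpos x) (hn : n * x.1 ≤ x.2) :
    0 < shear n x := by
  simp only [shear, AddMonoidHom.mk'_apply, Prod.lt_iff, Prod.fst_zero, Prod.snd_zero]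
  rcases hx with hx | ⟨hx, hx'⟩
  · exact Or.inl ⟨hx, by linarith⟩
  · exact Or.inr ⟨hx.ge, by simp [hx, hx']⟩

theorem le_slope_of_slopeLE {n : ℤ} {x y : ℤ × ℤ} (hx : Zpos x) (hy : Zpos y)
    (hxy : slopeLE x y) (hn : n * x.1 ≤ x.2) : n * y.1 ≤ y.2 := by
  unfold slopeLE at hxy
  have hy₁ : 0 ≤ y.1 := by rcases hy with hy | ⟨hy, -⟩ <;> omega
  rcases hx with hx | ⟨hx, hx'⟩
  · refine le_of_mul_le_mul_right ?_ hx
    nlinarith [mul_le_mul_of_nonneg_right hn hy₁]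
  · have : y.1 = 0 := by rw [hx, mul_zero] at hxy; nlinarith
    rcases hy with hy | ⟨-, hy⟩
    · omega
    · simp [this, hy.le]

theorem ConvexPath.le_slope {p : List (ℤ × ℤ)} (hp : ConvexPath p) {n : ℤ}
    (hhead : ∀ x ∈ p.head?, n * x.1 ≤ x.2) : ∀ x ∈ p, n * x.1 ≤ x.2 :=
  (IsChain.iff_mem.1 hp.2).induction _ p
    (fun x y ⟨hx, hy, hxy, _⟩ => le_slope_of_slopeLE (hp.1 x hx) (hp.1 y hy) hxy)
    fun hne => hhead _ (head?_eq_some_head hne)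

theorem stmt_10_general (α : ℤ × ℤ) (n : ℤ) :
    {p : List (ℤ × ℤ) | ConvexPath p ∧ p.sum = α ∧
      ∀ x ∈ p.head?, n * x.1 ≤ x.2}.Finite := by
  refine ((finite_setOf_forall_pos_sum_eq (shear n α)).preimage
    (map_injective_iff.2 (shear_injective n)).injOn).subset ?_
  rintro p ⟨hp, hsum, hhead⟩
  refine ⟨fun y hy => ?_, by rw [← map_list_sum, hsum]⟩
  obtain ⟨x, hx, rfl⟩ := mem_map.1 hy
  exact zero_lt_shear (hp.1 x hx) (hp.le_slope hhead x hx)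

/-- For any `α ∈ Z⁺` and `n ∈ ℤ`, there are only finitely many convex paths of total weight
`α` whose first entry has slope `≥ n`. -/
theorem stmt_10 (α : ℤ × ℤ) (hα : Zpos α) (n : ℤ) :
    {p : List (ℤ × ℤ) | ConvexPath p ∧ p.sum = α ∧
      ∀ x ∈ p.head?, n * x.1 ≤ x.2}.Finite :=
  stmt_10_general α n
end

section
/- Let Ê be a topologically free R-module with topological basis {β_p}_{p∈I}, R = ℂ[σ^{±1/2}, σ̄^{±1/2}], equipped with a ℂ-antilinear involution x ↦ x̄ sending σ ↦ σ^{-1}, σ̄ ↦ σ̄^{-1} and satisfying β̄_p ∈ β_p + ∏_{q≺p} R β_q for a partial order ≺ with the property that each p dominates only elements in a 'locally finite' way. Let R^> ⊂ R be the ℂ-span of monomials σ^a σ̄^b with a+b < 0. Then for every p ∈ I there exists a unique element b_p with b̄_p = b_p and b_p ∈ β_p + ∏_{q≺p} R^> β_q. -/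
/-- The ring `R = ℂ[σ^{±1/2}, σ̄^{±1/2}]`, realized as the Laurent polynomial ring on the
exponent lattice `ℤ × ℤ`, the exponent `(m,n)` standing for `σ^{m/2} σ̄^{n/2}`. -/
abbrev Rhalf : Type := AddMonoidAlgebra ℂ (ℤ × ℤ)

/-- The ℂ-antilinear bar involution of `R`: complex conjugation on coefficients together with
`σ ↦ σ⁻¹`, `σ̄ ↦ σ̄⁻¹`. -/
noncomputable def barR (P : Rhalf) : Rhalf :=
  P.coeff.sum fun e c => AddMonoidAlgebra.single (-e) ((starRingEnd ℂ) c)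

/-- Membership in `R^>`, the ℂ-span of the monomials `σ^a σ̄^b` with `a + b < 0`. -/
def memRgt (P : Rhalf) : Prop := ∀ e ∈ P.coeff.support, e.1 + e.2 < 0

/-!
Write `b_p = β_p + Σ_{q ≺ p} b_q β_q`. The `q`-th coordinate of bar invariance reads
`bar b_q + c_q = b_q` with `c_q = Σ_{s ≻ q} bar b_s · r s q`, which only involves coordinates
strictly above `q`; so the `b_q` can be constructed, and shown unique, by well-founded recursion
downwards from `p`. Involutivity of the bar map on `Ê` gives `bar c_q = -c_q`, and the symmetry and
reality of the `r s q` make `c_q` vanish on the monomials with `a + b = 0`. Hence, with `x` the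
`R^>`-part of `c_q`, we get `c_q = x - bar x`, and `b_q = x` is the unique solution in `R^>`
because `R^> ∩ bar R^> = 0`.
-/

open AddMonoidAlgebra

lemma coeff_barR (P : Rhalf) (e : ℤ × ℤ) : (barR P).coeff e = starRingEnd ℂ (P.coeff (-e)) := by
  simp +contextual [barR, coeff_finsuppSum, Finsupp.single_apply, neg_eq_iff_eq_neg]

noncomputable def barRingHom : Rhalf →+* Rhalf :=
  (mapDomainRingEquiv ℂ (AddEquiv.neg (ℤ × ℤ))).toRingHom.comp (mapRingHom (ℤ × ℤ) (starRingEnd ℂ))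

lemma coe_barRingHom : ⇑barRingHom = barR := by
  ext P e
  simp [barRingHom, coeff_barR]

lemma barR_zero : barR 0 = 0 := coe_barRingHom ▸ map_zero barRingHom

lemma barR_one : barR 1 = 1 := coe_barRingHom ▸ map_one barRingHom

lemma barR_barR (P : Rhalf) : barR (barR P) = P := by
  ext e
  simp [coeff_barR]

noncomputable def swapConj : Rhalf →+* Rhalf :=
  (mapDomainRingEquiv ℂ (AddEquiv.prodComm (M := ℤ) (N := ℤ))).toRingHom.comp
    (mapRingHom (ℤ × ℤ) (starRingEnd ℂ))

lemma coeff_swapConj (P : Rhalf) (e : ℤ × ℤ) :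
    (swapConj P).coeff e = starRingEnd ℂ (P.coeff e.swap) := by
  simp [swapConj]

lemma swapConj_barR (P : Rhalf) : swapConj (barR P) = barR (swapConj P) := by
  ext e
  simp [coeff_swapConj, coeff_barR]

/-- Together with `bar P = -P`, invariance under the composite of `σ ↔ σ̄` with complex
conjugation kills the coefficients of `P` on the antidiagonal `a + b = 0`. -/
noncomputable def swapConjFixed : Subring Rhalf := swapConj.eqLocus (RingHom.id Rhalf)

lemma mem_swapConjFixed_iff {P : Rhalf} :
    P ∈ swapConjFixed ↔ ∀ e, starRingEnd ℂ (P.coeff e.swap) = P.coeff e := by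
  rw [swapConjFixed, RingHom.mem_eqLocus, RingHom.id_apply, AddMonoidAlgebra.ext_iff,
    Finsupp.ext_iff]
  simp only [coeff_swapConj]

lemma mem_swapConjFixed_of_coeff_swap_eq_of_real {P : Rhalf}
    (h : ∀ e : ℤ × ℤ, P.coeff (e.2, e.1) = P.coeff e ∧ ∃ x : ℝ, P.coeff e = (x : ℂ)) :
    P ∈ swapConjFixed :=
  mem_swapConjFixed_iff.2 fun e => by
    obtain ⟨hswap, x, hx⟩ := h e
    rw [Prod.swap, hswap, hx, Complex.conj_ofReal]

lemma barR_mem_swapConjFixed {P : Rhalf} (hP : P ∈ swapConjFixed) : barR P ∈ swapConjFixed := by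
  show swapConj (barR P) = barR P
  rw [swapConj_barR, show swapConj P = P from hP]

lemma coeff_eq_zero_of_barR_eq_neg {P : Rhalf} (hP : P ∈ swapConjFixed) (hbar : barR P = -P)
    {e : ℤ × ℤ} (he : e.1 + e.2 = 0) : P.coeff e = 0 := by
  have hswap : e.swap = -e :=
    Prod.ext (by simp only [Prod.fst_swap, Prod.fst_neg]; omega)
      (by simp only [Prod.snd_swap, Prod.snd_neg]; omega)
  rw [← self_eq_neg]
  calc P.coeff e = starRingEnd ℂ (P.coeff e.swap) := (mem_swapConjFixed_iff.1 hP e).symm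
    _ = (barR P).coeff e := by rw [coeff_barR, hswap]
    _ = -P.coeff e := by rw [hbar]; rfl

def rgtPart (P : Rhalf) : Rhalf := ofCoeff (P.coeff.filter fun e => e.1 + e.2 < 0)

lemma coeff_rgtPart (P : Rhalf) (e : ℤ × ℤ) :
    (rgtPart P).coeff e = if e.1 + e.2 < 0 then P.coeff e else 0 :=
  Finsupp.filter_apply _ _ _

lemma memRgt_iff {P : Rhalf} : memRgt P ↔ ∀ e : ℤ × ℤ, 0 ≤ e.1 + e.2 → P.coeff e = 0 := by
  simp only [memRgt, Finsupp.mem_support_iff]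
  exact forall_congr' fun e => by rw [← not_lt, not_imp_comm]

lemma memRgt_rgtPart (P : Rhalf) : memRgt (rgtPart P) :=
  memRgt_iff.2 fun e he => by rw [coeff_rgtPart, if_neg he.not_gt]

lemma memRgt_sub {P Q : Rhalf} (hP : memRgt P) (hQ : memRgt Q) : memRgt (P - Q) := by
  rw [memRgt_iff] at *
  intro e he
  rw [coeff_sub, Finsupp.sub_apply, hP e he, hQ e he, sub_zero]

lemma rgtPart_mem_swapConjFixed {P : Rhalf} (hP : P ∈ swapConjFixed) :
    rgtPart P ∈ swapConjFixed := by
  rw [mem_swapConjFixed_iff] at *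
  intro e
  simp only [coeff_rgtPart, Prod.fst_swap, Prod.snd_swap, add_comm e.2, apply_ite, map_zero, hP]
  split_ifs <;> rfl

lemma rgtPart_sub_barR_rgtPart {P : Rhalf} (hP : P ∈ swapConjFixed) (hbar : barR P = -P) :
    rgtPart P - barR (rgtPart P) = P := by
  ext e
  have hneg : starRingEnd ℂ (P.coeff (-e)) = -P.coeff e := by
    rw [← coeff_barR, hbar]; rfl
  rw [coeff_sub, Finsupp.sub_apply, coeff_barR, coeff_rgtPart, coeff_rgtPart]
  simp only [Prod.fst_neg, Prod.snd_neg]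
  rcases lt_trichotomy (e.1 + e.2) 0 with h | h | h
  · rw [if_pos h, if_neg (by omega), map_zero, sub_zero]
  · rw [if_neg (by omega), if_neg (by omega), map_zero, sub_zero,
      coeff_eq_zero_of_barR_eq_neg hP hbar h]
  · rw [if_neg (by omega), if_pos (by omega), zero_sub, hneg, neg_neg]

lemma eq_zero_of_memRgt_of_barR_eq_self {P : Rhalf} (hP : memRgt P) (hbar : barR P = P) :
    P = 0 := by
  rw [memRgt_iff] at hP
  ext e
  rcases le_or_gt 0 (e.1 + e.2) with h | h
  · exact hP e h
  · rw [← hbar, coeff_barR, hP (-e) (by simp only [Prod.fst_neg, Prod.snd_neg]; omega), map_zero]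
    rfl

section BarVec

variable {I : Type*} {prec : I → I → Prop} {r : I → I → Rhalf}

variable (r) in
/-- The coordinates of the bar involution of `Σ_s v_s β_s`, where `bar β_s = Σ_q r s q β_q`. -/
noncomputable def barVec (v : I → Rhalf) (q : I) : Rhalf := ∑ᶠ s, barR (v s) * r s q

variable (prec r) in
open Classical in
noncomputable def upperBar (v : I → Rhalf) (q : I) : Rhalf :=
  ∑ᶠ s, if prec q s then barR (v s) * r s q else 0

lemma barVec_eq_sum {v : I → Rhalf} {q : I} {S : Finset I} (hS : ∀ s, r s q ≠ 0 → s ∈ S) :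
    barVec r v q = ∑ s ∈ S, barR (v s) * r s q :=
  finsum_eq_sum_of_support_subset _ fun s hs => hS s (right_ne_zero_of_mul hs)

lemma barVec_barVec [DecidableEq I] (hcol : ∀ q, {s | r s q ≠ 0}.Finite)
    (hinv : ∀ p q, ∑ᶠ s, barR (r p s) * r s q = if q = p then 1 else 0) (v : I → Rhalf) :
    barVec r (barVec r v) = v := by
  funext q
  set S := (hcol q).toFinset
  set T := insert q (S.biUnion fun s => (hcol s).toFinset)
  have hS : ∀ s, r s q ≠ 0 → s ∈ S := fun s => (hcol q).mem_toFinset.2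
  have hT : ∀ s ∈ S, ∀ t, r t s ≠ 0 → t ∈ T :=
    fun s hs t ht =>
      Finset.mem_insert_of_mem (Finset.mem_biUnion.2 ⟨s, hs, (hcol s).mem_toFinset.2 ht⟩)
  have hinvS : ∀ t, ∑ s ∈ S, barR (r t s) * r s q = if q = t then 1 else 0 := fun t => by
    rw [← hinv t q]
    exact (finsum_eq_sum_of_support_subset _ fun s hs => hS s (right_ne_zero_of_mul hs)).symm
  calc barVec r (barVec r v) q = ∑ s ∈ S, barR (∑ t ∈ T, barR (v t) * r t s) * r s q :=
        (barVec_eq_sum hS).trans <| Finset.sum_congr rfl fun s hs => by rw [barVec_eq_sum (hT s hs)]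
    _ = ∑ t ∈ T, v t * ∑ s ∈ S, barR (r t s) * r s q := by
        simp only [← coe_barRingHom, map_sum, map_mul]
        simp only [coe_barRingHom, barR_barR, Finset.sum_mul, Finset.mul_sum, mul_assoc]
        exact Finset.sum_comm
    _ = v q := by
        simp only [hinvS, mul_ite, mul_one, mul_zero, Finset.sum_ite_eq]
        exact if_pos (Finset.mem_insert_self _ _)

lemma upperBar_congr {v w : I → Rhalf} {q : I} (h : ∀ s, prec q s → v s = w s) :
    upperBar prec r v q = upperBar prec r w q :=
  finsum_congr fun s => by split_ifs with hs; exacts [by rw [h s hs], rfl]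

lemma upperBar_eq_zero {v : I → Rhalf} {q : I} (h : ∀ s, prec q s → v s = 0) :
    upperBar prec r v q = 0 :=
  (upperBar_congr h).trans <| finsum_eq_zero_of_forall_eq_zero fun s => by
    simp only [barR_zero, zero_mul, ite_self]

lemma barVec_eq_barR_add_upperBar (hirr : ∀ p, ¬ prec p p) (hdiag : ∀ p, r p p = 1)
    (htri : ∀ p q, r p q ≠ 0 → q = p ∨ prec q p) (hcol : ∀ q, {s | r s q ≠ 0}.Finite)
    (v : I → Rhalf) (q : I) :
    barVec r v q = barR (v q) + upperBar prec r v q := by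
  classical
  have hterm : ∀ s, barR (v s) * r s q =
      (if s = q then barR (v q) else 0) + if prec q s then barR (v s) * r s q else 0 := by
    intro s
    by_cases hsq : s = q
    · subst hsq; simp [hdiag, hirr]
    by_cases hqs : prec q s
    · simp [hsq, hqs]
    · have : r s q = 0 := by
        by_contra h
        exact (htri s q h).elim (fun h => hsq h.symm) hqs
      simp [hsq, hqs, this]
  have hfin : Function.HasFiniteSupport fun s => if prec q s then barR (v s) * r s q else 0 :=
    (hcol q).subset fun s hs => by
      rw [Function.mem_support] at hs
      split_ifs at hs
      exacts [right_ne_zero_of_mul hs, absurd rfl hs]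
  rw [barVec, finsum_congr hterm, finsum_add_distrib ((Set.finite_singleton q).subset ?_) hfin,
    finsum_eq_single _ q fun s hs => if_neg hs, if_pos rfl, upperBar]
  intro s hs
  rw [Function.mem_support] at hs
  exact Set.mem_singleton_iff.2 (by_contra fun h => hs (if_neg h))

lemma barR_upperBar (hirr : ∀ p, ¬ prec p p) (htrans : Transitive prec) (hdiag : ∀ p, r p p = 1)
    (htri : ∀ p q, r p q ≠ 0 → q = p ∨ prec q p) (hcol : ∀ q, {s | r s q ≠ 0}.Finite)
    [DecidableEq I] (hinv : ∀ p q, ∑ᶠ s, barR (r p s) * r s q = if q = p then 1 else 0)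
    {v : I → Rhalf} {q : I} (hv : ∀ s, prec q s → barVec r v s = v s) :
    barR (upperBar prec r v q) = -upperBar prec r v q := by
  classical
  -- The truncation `u` of `v` above `q` is bar invariant above `q` and `barVec r u q` is the
  -- upper sum `c`, so the `q`-th coordinate of `barVec r (barVec r u) = u` reads `bar c + c = 0`.
  set u : I → Rhalf := fun s => if prec q s then v s else 0
  have hu : ∀ s, prec q s → u s = v s := fun s hs => if_pos hs
  have hbar_u : ∀ s, prec q s → barVec r u s = u s := by
    intro s hs
    rw [hu s hs, ← hv s hs]
    refine finsum_congr fun t => ?_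
    by_cases hts : r t s = 0
    · simp only [hts, mul_zero]
    · rcases htri t s hts with hst | hst
      · rw [← hst, hu s hs]
      · rw [hu t (htrans hs hst)]
  have hsplit := barVec_eq_barR_add_upperBar hirr hdiag htri hcol
  have key := congrFun (barVec_barVec hcol hinv u) q
  rw [hsplit, hsplit u q, upperBar_congr hbar_u, upperBar_congr hu] at key
  simp only [u, if_neg (hirr q), barR_zero, zero_add] at key
  exact eq_neg_of_add_eq_zero_left key

lemma upperBar_mem_swapConjFixed {v : I → Rhalf} {q : I}
    (hv : ∀ s, prec q s → v s ∈ swapConjFixed) (hr : ∀ s, r s q ∈ swapConjFixed) :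
    upperBar prec r v q ∈ swapConjFixed :=
  finsum_induction _ (zero_mem _) (fun _ _ => add_mem) fun s => by
    split_ifs with hs
    exacts [mul_mem (barR_mem_swapConjFixed (hv s hs)) (hr s), zero_mem _]

variable (r) in
open Classical in
noncomputable def klBasis (hwf : WellFounded fun a b => prec b a) (p : I) : I → Rhalf :=
  hwf.fix fun q ih =>
    if q = p then 1 else rgtPart (∑ᶠ s, if h : prec q s then barR (ih s h) * r s q else 0)

section klBasis

variable (hwf : WellFounded fun a b => prec b a) (p : I)

open Classical in
lemma klBasis_apply (q : I) : klBasis r hwf p q =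
    if q = p then 1 else rgtPart (upperBar prec r (klBasis r hwf p) q) := by
  rw [klBasis, hwf.fix_eq]
  simp only [dite_eq_ite]
  rfl

lemma klBasis_self : klBasis r hwf p p = 1 := by
  rw [klBasis_apply, if_pos rfl]

lemma memRgt_klBasis {q : I} (hq : q ≠ p) : memRgt (klBasis r hwf p q) := by
  rw [klBasis_apply, if_neg hq]
  exact memRgt_rgtPart _

lemma klBasis_eq_zero (htrans : Transitive prec) {q : I} (hqp : q ≠ p) (hq : ¬ prec q p) :
    klBasis r hwf p q = 0 := by
  induction q using hwf.induction with
  | _ q ih =>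
    rw [klBasis_apply, if_neg hqp, upperBar_eq_zero]
    · ext e
      simp [coeff_rgtPart]
    · intro s hs
      exact ih s hs (fun h => hq (h ▸ hs)) fun h => hq (htrans hs h)

lemma klBasis_mem_swapConjFixed_and_barVec_eq (hirr : ∀ p, ¬ prec p p)
    (htrans : Transitive prec) (hdiag : ∀ p, r p p = 1)
    (htri : ∀ p q, r p q ≠ 0 → q = p ∨ prec q p) (hcol : ∀ q, {s | r s q ≠ 0}.Finite)
    [DecidableEq I] (hinv : ∀ p q, ∑ᶠ s, barR (r p s) * r s q = if q = p then 1 else 0)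
    (hr : ∀ s q, r s q ∈ swapConjFixed) (q : I) :
    klBasis r hwf p q ∈ swapConjFixed ∧ barVec r (klBasis r hwf p) q = klBasis r hwf p q := by
  induction q using hwf.induction with
  | _ q ih =>
    rw [barVec_eq_barR_add_upperBar hirr hdiag htri hcol]
    by_cases hqp : q = p
    · subst hqp
      have hc : upperBar prec r (klBasis r hwf q) q = 0 := upperBar_eq_zero fun s hs =>
        klBasis_eq_zero hwf q htrans (fun h => hirr q (h ▸ hs)) fun h => hirr q (htrans hs h)
      rw [hc, klBasis_self, barR_one, add_zero]
      exact ⟨one_mem _, rfl⟩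
    · set c := upperBar prec r (klBasis r hwf p) q
      have hc_mem : c ∈ swapConjFixed :=
        upperBar_mem_swapConjFixed (fun s hs => (ih s hs).1) (hr · q)
      have hc_bar : barR c = -c :=
        barR_upperBar hirr htrans hdiag htri hcol hinv fun s hs => (ih s hs).2
      rw [klBasis_apply, if_neg hqp]
      refine ⟨rgtPart_mem_swapConjFixed hc_mem, ?_⟩
      linear_combination -(rgtPart_sub_barR_rgtPart hc_mem hc_bar)

end klBasis

lemma eq_of_barVec_eq_self (hwf : WellFounded fun a b => prec b a) (hirr : ∀ p, ¬ prec p p)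
    (hdiag : ∀ p, r p p = 1) (htri : ∀ p q, r p q ≠ 0 → q = p ∨ prec q p)
    (hcol : ∀ q, {s | r s q ≠ 0}.Finite) {p : I} {b b' : I → Rhalf}
    (hb : ∀ q, barVec r b q = b q) (hb' : ∀ q, barVec r b' q = b' q) (hp : b p = b' p)
    (hrgt : ∀ q, q ≠ p → memRgt (b q)) (hrgt' : ∀ q, q ≠ p → memRgt (b' q)) : b = b' := by
  funext q
  induction q using hwf.induction with
  | _ q ih =>
    by_cases hqp : q = p
    · rw [hqp, hp]
    have hsplit := barVec_eq_barR_add_upperBar hirr hdiag htri hcol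
    have hfix : barR (b q - b' q) = b q - b' q := by
      rw [← coe_barRingHom, map_sub, coe_barRingHom]
      linear_combination (hsplit b q).symm.trans (hb q) - (hsplit b' q).symm.trans (hb' q) -
        upperBar_congr (prec := prec) (r := r) ih
    exact sub_eq_zero.1 <|
      eq_zero_of_memRgt_of_barR_eq_self (memRgt_sub (hrgt q hqp) (hrgt' q hqp)) hfix

end BarVec

/-- **Abstract Kazhdan–Lusztig lemma.**  Let `Ê = ∏_{p∈I} R β_p` be a topologically free
`R`-module, `≺` a strict partial order on `I` with no infinite ascending chains, and suppose
a bar involution is given on `Ê`, antilinear over the bar involution of `R`, by the matrix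
`r` (so `bar β_p = Σ_q r p q β_q`), which is unitriangular (`r p p = 1`, `r p q ≠ 0 ⟹ q ⪯ p`),
column-finite, involutive, and has structure constants symmetric in `σ ↔ σ̄` with real
coefficients.  Then for every `p` there is a unique bar-invariant element
`b_p ∈ β_p + ∏_{q ≺ p} R^> β_q`. -/
theorem stmt_14 {I : Type*} [DecidableEq I] (prec : I → I → Prop)
    (hirr : ∀ p, ¬ prec p p) (htrans : Transitive prec)
    (hwf : WellFounded fun a b => prec b a)
    (r : I → I → Rhalf)
    (hdiag : ∀ p, r p p = 1)
    (htri : ∀ p q, r p q ≠ 0 → q = p ∨ prec q p)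
    (hcol : ∀ q, {s | r s q ≠ 0}.Finite)
    (hinv : ∀ p q, ∑ᶠ s, barR (r p s) * r s q = if q = p then 1 else 0)
    (hsym : ∀ p q (e : ℤ × ℤ), (r p q).coeff (e.2, e.1) = (r p q).coeff e ∧ ∃ x : ℝ, (r p q).coeff e = (x : ℂ)) :
    ∀ p, ∃! b : I → Rhalf,
      b p = 1 ∧
      (∀ q, q ≠ p → (b q ≠ 0 → prec q p) ∧ memRgt (b q)) ∧
      (∀ q, ∑ᶠ s, barR (b s) * r s q = b q) := by
  intro p
  have hbar := klBasis_mem_swapConjFixed_and_barVec_eq hwf p hirr htrans hdiag htri hcol hinv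
    fun s q => mem_swapConjFixed_of_coeff_swap_eq_of_real (hsym s q)
  refine ⟨klBasis r hwf p,
    ⟨klBasis_self hwf p, fun q hq => ⟨fun hne => ?_, memRgt_klBasis hwf p hq⟩, fun q => (hbar q).2⟩,
    fun b hb => ?_⟩
  · by_contra h
    exact hne (klBasis_eq_zero hwf p htrans hq h)
  · exact eq_of_barVec_eq_self hwf hirr hdiag htri hcol hb.2.2 (fun q => (hbar q).2)
      (hb.1.trans (klBasis_self hwf p).symm) (fun q hq => (hb.2.1 q hq).2)
      fun q hq => memRgt_klBasis hwf p hq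
end

section
/- Let a be a complex number with |a| < 1 and let i_0 be an integer. Suppose ω_j (j in a nonempty finite set K) are complex numbers of modulus 1 and c_f is a sequence with c_f = Σ_{j∈K} ω_j^f + ε_f where ε_f → 0. Then c_f does not converge to 0; in particular if Σ_{i≤i_0} (±1)^{i f} a^{(i_0−i)f} S_i(f) = 0 for all f, where S_{i_0}(f) = Σ_{j∈K_{i_0}} ω_{i_0 j}^f and all lower terms carry a positive power of a^f, then K_{i_0} = ∅. -/
/-!
If `s n = ∑ j, ω j ^ n` tended to `0`, so would `|s n|² = ∑_{j,l} (ω j * conj (ω l)) ^ n` and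
hence its Cesàro means. But for `‖z‖ ≤ 1` the Cesàro means of `z ^ n` tend to `1` if `z = 1` and
to `0` otherwise, so those of `|s n|²` tend to the number of pairs `(j, l)` with `ω j = ω l`,
which is positive because of the diagonal.

In the vanishing expansion each term with `i < i₀` is `(a ^ (i₀ - i)) ^ n` times a sum of `K i`
unimodular powers, so it tends to `0`; hence so does the top term `± S_{i₀}(n)`, which forces
`K i₀ = 0`.
-/

open Filter Finset Topology ComplexConjugate

open Classical in
theorem tendsto_cesaro_geom {𝕜 : Type*} [NormedField 𝕜] [NormedSpace ℝ 𝕜] {z : 𝕜}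
    (hz : ‖z‖ ≤ 1) :
    Tendsto (fun n : ℕ => (n⁻¹ : ℝ) • ∑ i ∈ range n, z ^ i) atTop
      (𝓝 (if z = 1 then 1 else 0)) := by
  split_ifs with hz1
  · refine tendsto_const_nhds.congr' ?_
    filter_upwards [eventually_ge_atTop 1] with n hn
    have hn' : (n : ℝ) ≠ 0 := by positivity
    simp [hz1, ← Nat.cast_smul_eq_nsmul ℝ, smul_smul, inv_mul_cancel₀ hn']
  have hdist : 0 < ‖z - 1‖ := norm_pos_iff.2 (sub_ne_zero.2 hz1)
  refine squeeze_zero_norm (fun n => ?_) (tendsto_const_div_atTop_nhds_zero_nat (2 / ‖z - 1‖))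
  have hpow : ‖z ^ n - 1‖ ≤ 2 := by
    calc ‖z ^ n - 1‖ ≤ ‖z‖ ^ n + 1 := by simpa using norm_sub_le (z ^ n) 1
      _ ≤ 2 := by linarith [pow_le_one₀ (norm_nonneg z) hz (n := n)]
  rw [geom_sum_eq hz1, norm_smul, norm_div, Real.norm_eq_abs, abs_inv, Nat.abs_cast,
    inv_mul_eq_div]
  gcongr

theorem sum_pow_mul_conj_sum_pow {ι : Type*} [Fintype ι] (ω : ι → ℂ) (n : ℕ) :
    (∑ j, ω j ^ n) * conj (∑ j, ω j ^ n) = ∑ p : ι × ι, (ω p.1 * conj (ω p.2)) ^ n := by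
  simp [map_sum, sum_mul_sum, Fintype.sum_prod_type, mul_pow]

open Classical in
theorem not_tendsto_sum_pow_nhds_zero {ι : Type*} [Fintype ι] [Nonempty ι] {ω : ι → ℂ}
    (hω : ∀ j, ‖ω j‖ = 1) : ¬Tendsto (fun n => ∑ j, ω j ^ n) atTop (𝓝 0) := by
  intro hS
  set z : ι × ι → ℂ := fun p => ω p.1 * conj (ω p.2)
  have hz : ∀ p, ‖z p‖ ≤ 1 := fun p => by simp [z, hω]
  have hzero : Tendsto (fun n : ℕ => (n⁻¹ : ℝ) • ∑ m ∈ range n, ∑ p, z p ^ m) atTop (𝓝 0) := by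
    have hconj := (Complex.continuous_conj.tendsto 0).comp hS
    rw [map_zero] at hconj
    have := (hS.mul hconj).cesaro_smul
    simp only [mul_zero, Function.comp_def, sum_pow_mul_conj_sum_pow] at this
    exact this
  have hcount : Tendsto (fun n : ℕ => (n⁻¹ : ℝ) • ∑ m ∈ range n, ∑ p, z p ^ m) atTop
      (𝓝 (∑ p, if z p = 1 then 1 else 0)) := by
    refine (tendsto_finsetSum _ fun p _ => tendsto_cesaro_geom (hz p)).congr fun n => ?_
    rw [sum_comm, smul_sum]
  obtain ⟨j⟩ := ‹Nonempty ι›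
  have hdiag : z (j, j) = 1 := by simp [z, Complex.mul_conj, Complex.normSq_eq_norm_sq, hω]
  have := tendsto_nhds_unique hcount hzero
  rw [sum_boole, Nat.cast_eq_zero, card_eq_zero, filter_eq_empty_iff] at this
  exact this (mem_univ _) hdiag

theorem tendsto_pow_mul_sum_pow_nhds_zero {R ι : Type*} [SeminormedCommRing R] [Fintype ι]
    {b : R} (hb : ‖b‖ < 1) {ω : ι → R} (hω : ∀ j, ‖ω j‖ ≤ 1) :
    Tendsto (fun n : ℕ => b ^ n * ∑ j, ω j ^ n) atTop (𝓝 0) := by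
  simp_rw [mul_sum, ← mul_pow]
  rw [← sum_const_zero (s := (univ : Finset ι))]
  refine tendsto_finsetSum _ fun j _ => tendsto_pow_atTop_nhds_zero_of_norm_lt_one ?_
  calc ‖b * ω j‖ ≤ ‖b‖ * ‖ω j‖ := norm_mul_le _ _
    _ ≤ ‖b‖ := mul_le_of_le_one_right (norm_nonneg b) (hω j)
    _ < 1 := hb

theorem tendsto_zpow_mul_sum_pow_nhds_zero {𝕜 ι : Type*} [NormedField 𝕜] [Fintype ι]
    {a : 𝕜} (ha : ‖a‖ < 1) {m : ℤ} (hm : 0 < m) {ω : ι → 𝕜} (hω : ∀ j, ‖ω j‖ ≤ 1) :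
    Tendsto (fun n : ℕ => a ^ (m * n) * ∑ j, ω j ^ n) atTop (𝓝 0) := by
  lift m to ℕ using hm.le
  simp_rw [← Nat.cast_mul, zpow_natCast, pow_mul]
  refine tendsto_pow_mul_sum_pow_nhds_zero ?_ hω
  rw [norm_pow]
  exact pow_lt_one₀ (norm_nonneg a) ha (by omega)

theorem tendsto_nhds_zero_of_sum_eventually_eq_zero {ι α M : Type*} [DecidableEq ι]
    [AddCommGroup M] [TopologicalSpace M] [IsTopologicalAddGroup M] {l : Filter α}
    {g : ι → α → M} {S : Finset ι} {i₀ : ι} (hi₀ : i₀ ∈ S)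
    (hsum : ∀ᶠ x in l, ∑ i ∈ S, g i x = 0) (hg : ∀ i ∈ S.erase i₀, Tendsto (g i) l (𝓝 0)) :
    Tendsto (g i₀) l (𝓝 0) := by
  have hrest := (tendsto_finsetSum _ hg).neg
  rw [sum_const_zero, neg_zero] at hrest
  refine hrest.congr' ?_
  filter_upwards [hsum] with x hx
  rw [← add_sum_erase _ _ hi₀] at hx
  exact (eq_neg_of_add_eq_zero_left hx).symm

/-- A perturbed nonempty finite sum of `f`-th powers of unit complex numbers does not tend
to `0`; in particular, in a vanishing alternating expansion
`Σ_{i ≤ i₀} (-1)^{i(f+1)} a^{(i₀−i)f} S_i(f) = 0` (with `|a| < 1`, `S_i(f) = Σ_{j∈K_i} ω_{ij}^f`,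
`|ω_{ij}| = 1`, all lower terms carrying a positive power of `a^f`) the top index set `K_{i₀}`
must be empty. -/
theorem stmt_19 :
    (∀ (k : ℕ), 0 < k → ∀ ω : Fin k → ℂ, (∀ j, ‖ω j‖ = 1) →
      ∀ ε : ℕ → ℂ, Tendsto ε atTop (nhds 0) →
        ¬ Tendsto (fun f : ℕ => (∑ j, ω j ^ f) + ε f) atTop (nhds 0)) ∧
    (∀ (a : ℂ), ‖a‖ < 1 → ∀ (i₀ : ℤ) (S : Finset ℤ), (∀ i ∈ S, i ≤ i₀) → i₀ ∈ S →
      ∀ (K : ℤ → ℕ) (ω : (i : ℤ) → Fin (K i) → ℂ),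
        (∀ i j, ‖ω i j‖ = 1) → (∀ i ∉ S, K i = 0) →
        (∀ f : ℕ, 1 ≤ f →
          ∑ i ∈ S, (-1 : ℂ) ^ (i * ((f : ℤ) + 1)) * a ^ ((i₀ - i) * (f : ℤ)) *
            ∑ j, ω i j ^ f = 0) →
        K i₀ = 0) := by
  refine ⟨fun k hk ω hω ε hε h => ?_, fun a ha i₀ S hS hi₀ K ω hω _ hsum => ?_⟩
  · have : Nonempty (Fin k) := ⟨⟨0, hk⟩⟩
    exact not_tendsto_sum_pow_nhds_zero hω (by simpa using h.sub hε)
  · by_contra hK₀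
    have : Nonempty (Fin (K i₀)) := ⟨⟨0, Nat.pos_of_ne_zero hK₀⟩⟩
    have htop := tendsto_nhds_zero_of_sum_eventually_eq_zero hi₀
      (eventually_atTop.2 ⟨1, hsum⟩) fun i hi => ?_
    · refine not_tendsto_sum_pow_nhds_zero (hω i₀) ?_
      simpa [tendsto_zero_iff_norm_tendsto_zero] using htop
    · have hi : i < i₀ := lt_of_le_of_ne (hS i (mem_of_mem_erase hi)) (ne_of_mem_erase hi)
      rw [tendsto_zero_iff_norm_tendsto_zero]
      simpa [mul_assoc] using (tendsto_zpow_mul_sum_pow_nhds_zero ha (sub_pos.2 hi)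
        fun j => (hω i j).le).norm
end
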